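/- Define ρ = (1/2)|00⟩⟨00| + (1/4)|01⟩⟨01| + (1/8)(|10⟩⟨10| + |11⟩⟨11|) and σ = (1/2)|φ⁺⟩⟨φ⁺| + (1/4)|φ⁻⟩⟨φ⁻| + (1/8)(|01⟩⟨01| + |10⟩⟨10|) on ℂ²⊗ℂ², where |φ^±⟩ = (|00⟩ ± |11⟩)/√2. Then ρ and σ are both of full rank (so their ranges are trivially LU equivalent), they have the same eigenvalues, but ρ is not LU equivalent to σ. -/

import Mathlib

open Matrix
open scoped Kronecker

/-- Local unitary equivalence of operators on `ℂ² ⊗ ℂ²`. -/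
def LUequiv (M N : Matrix (Fin 2 × Fin 2) (Fin 2 × Fin 2) ℂ) : Prop :=
  ∃ U ∈ Matrix.unitaryGroup (Fin 2) ℂ, ∃ V ∈ Matrix.unitaryGroup (Fin 2) ℂ,
    M = (U ⊗ₖ V) * N * (U ⊗ₖ V)ᴴ

/-- Standard basis vector `|ij⟩` of `ℂ² ⊗ ℂ²`. -/
def e (i j : Fin 2) : Fin 2 × Fin 2 → ℂ := fun p => if p = (i, j) then 1 else 0

noncomputable def phiPlus : Fin 2 × Fin 2 → ℂ :=
  (((Real.sqrt 2)⁻¹ : ℝ) : ℂ) • (e 0 0 + e 1 1)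

noncomputable def phiMinus : Fin 2 × Fin 2 → ℂ :=
  (((Real.sqrt 2)⁻¹ : ℝ) : ℂ) • (e 0 0 - e 1 1)

noncomputable def rhoEx : Matrix (Fin 2 × Fin 2) (Fin 2 × Fin 2) ℂ :=
  (1/2 : ℂ) • Matrix.vecMulVec (e 0 0) (star (e 0 0))
  + (1/4 : ℂ) • Matrix.vecMulVec (e 0 1) (star (e 0 1))
  + (1/8 : ℂ) • (Matrix.vecMulVec (e 1 0) (star (e 1 0))
      + Matrix.vecMulVec (e 1 1) (star (e 1 1)))

noncomputable def sigmaEx : Matrix (Fin 2 × Fin 2) (Fin 2 × Fin 2) ℂ :=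
  (1/2 : ℂ) • Matrix.vecMulVec phiPlus (star phiPlus)
  + (1/4 : ℂ) • Matrix.vecMulVec phiMinus (star phiMinus)
  + (1/8 : ℂ) • (Matrix.vecMulVec (e 0 1) (star (e 0 1))
      + Matrix.vecMulVec (e 1 0) (star (e 1 0)))

/- ### Auxiliary material -/

lemma hc : (((Real.sqrt 2)⁻¹ : ℝ) : ℂ) * (((Real.sqrt 2)⁻¹ : ℝ) : ℂ) = 1/2 := by
  norm_cast
  rw [← mul_inv, Real.mul_self_sqrt (by norm_num)]
  norm_num

lemma pp : Matrix.vecMulVec phiPlus (star phiPlus)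
    = (1/2 : ℂ) • Matrix.vecMulVec (e 0 0 + e 1 1) (star (e 0 0 + e 1 1)) := by
  ext p q
  simp only [phiPlus, Matrix.vecMulVec_apply, Pi.smul_apply, star_smul, Pi.star_apply,
    smul_eq_mul, Matrix.smul_apply, Complex.star_def, Complex.conj_ofReal]
  linear_combination ((e 0 0 + e 1 1) p * (starRingEnd ℂ) ((e 0 0 + e 1 1) q)) * hc

lemma pm : Matrix.vecMulVec phiMinus (star phiMinus)
    = (1/2 : ℂ) • Matrix.vecMulVec (e 0 0 - e 1 1) (star (e 0 0 - e 1 1)) := by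
  ext p q
  simp only [phiMinus, Matrix.vecMulVec_apply, Pi.smul_apply, star_smul, Pi.star_apply,
    smul_eq_mul, Matrix.smul_apply, Complex.star_def, Complex.conj_ofReal]
  linear_combination ((e 0 0 - e 1 1) p * (starRingEnd ℂ) ((e 0 0 - e 1 1) q)) * hc

lemma rho_diag : rhoEx = Matrix.diagonal
    (fun p => if p = (0,0) then 1/2 else if p = (0,1) then 1/4 else 1/8) := by
  ext ⟨i,j⟩ ⟨k,l⟩
  fin_cases i <;> fin_cases j <;> fin_cases k <;> fin_cases l <;>
    simp [rhoEx, e, Matrix.vecMulVec_apply, Matrix.diagonal, Prod.ext_iff]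

noncomputable def Smat : Matrix (Fin 2 × Fin 2) (Fin 2 × Fin 2) ℂ := Matrix.of fun p q =>
  if p = (0,0) ∧ q = (0,0) then 3/8
  else if p = (0,0) ∧ q = (1,1) then 1/8
  else if p = (1,1) ∧ q = (0,0) then 1/8
  else if p = (1,1) ∧ q = (1,1) then 3/8
  else if p = (0,1) ∧ q = (0,1) then 1/8
  else if p = (1,0) ∧ q = (1,0) then 1/8
  else 0

lemma sigma_eq : sigmaEx = Smat := by
  rw [sigmaEx, pp, pm]
  ext ⟨i,j⟩ ⟨k,l⟩
  fin_cases i <;> fin_cases j <;> fin_cases k <;> fin_cases l <;>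
    simp [Smat, e, Matrix.vecMulVec_apply, Prod.ext_iff] <;> norm_num

def q4 : Fin 2 × Fin 2 ≃ Fin 4 where
  toFun p := ![![0,1],![2,3]] p.1 p.2
  invFun i := ![(0,0),(0,1),(1,0),(1,1)] i
  left_inv := by decide
  right_inv := by decide

lemma det22 (M : Matrix (Fin 2 × Fin 2) (Fin 2 × Fin 2) ℂ) :
    M.det = Matrix.det !![M (0,0) (0,0), M (0,0) (0,1), M (0,0) (1,0), M (0,0) (1,1);
      M (0,1) (0,0), M (0,1) (0,1), M (0,1) (1,0), M (0,1) (1,1);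
      M (1,0) (0,0), M (1,0) (0,1), M (1,0) (1,0), M (1,0) (1,1);
      M (1,1) (0,0), M (1,1) (0,1), M (1,1) (1,0), M (1,1) (1,1)] := by
  rw [← Matrix.det_reindex_self q4 M]
  congr 1
  ext i j
  fin_cases i <;> fin_cases j <;> rfl

lemma charpoly_eval {n : Type*} [DecidableEq n] [Fintype n] (M : Matrix n n ℂ) (r : ℂ) :
    M.charpoly.eval r = (r • (1 : Matrix n n ℂ) - M).det := by
  rw [Matrix.charpoly, _root_.eval_det, Matrix.matPolyEquiv_charmatrix]
  simp [Matrix.scalar, smul_eq_diagonal_mul]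
  rfl

lemma det_rho : rhoEx.det = 1/512 := by
  rw [det22, rho_diag]
  simp only [Matrix.diagonal, Matrix.of_apply, Prod.ext_iff]
  norm_num [Matrix.det_succ_row_zero, Fin.sum_univ_succ, Matrix.cons_val_two, Matrix.vecHead, Matrix.vecTail]

lemma det_sigma : sigmaEx.det = 1/512 := by
  rw [det22, sigma_eq]
  simp only [Smat, Matrix.of_apply, Prod.ext_iff]
  norm_num [Matrix.det_succ_row_zero, Fin.sum_univ_succ, Matrix.cons_val_two, Matrix.vecHead, Matrix.vecTail,
    show ((2 : Fin 3).castSucc : Fin 4) = 2 from rfl]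

lemma charpoly_eq : rhoEx.charpoly = sigmaEx.charpoly := by
  apply Polynomial.funext
  intro r
  rw [charpoly_eval, charpoly_eval, det22, det22, rho_diag, sigma_eq]
  simp only [Matrix.sub_apply, Matrix.smul_apply, Matrix.one_apply, Matrix.diagonal,
    Smat, Matrix.of_apply, smul_eq_mul]
  norm_num [Prod.ext_iff]
  simp [Matrix.det_succ_row_zero, Fin.sum_univ_succ, Matrix.cons_val_two, Matrix.vecHead, Matrix.vecTail,
    show ((2 : Fin 3).castSucc : Fin 4) = 2 from rfl, show (Fin.succAbove 3 2 : Fin 4) = 2 from rfl]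
  ring

lemma hA : (rhoEx - (1/4 : ℂ) • 1) * (rhoEx - (1/8 : ℂ) • 1)
    = (3/32 : ℂ) • Matrix.vecMulVec (e 0 0) (star (e 0 0)) := by
  rw [rho_diag]
  ext ⟨i,j⟩ ⟨k,l⟩
  fin_cases i <;> fin_cases j <;> fin_cases k <;> fin_cases l <;>
    simp [Matrix.diagonal, e, Matrix.mul_apply, Fintype.sum_prod_type, Fin.sum_univ_two,
      Matrix.vecMulVec_apply, Matrix.one_apply, Prod.ext_iff] <;> norm_num

lemma hB : (sigmaEx - (1/4 : ℂ) • 1) * (sigmaEx - (1/8 : ℂ) • 1)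
    = (3/64 : ℂ) • Matrix.vecMulVec (e 0 0 + e 1 1) (star (e 0 0 + e 1 1)) := by
  rw [sigma_eq]
  ext ⟨i,j⟩ ⟨k,l⟩
  fin_cases i <;> fin_cases j <;> fin_cases k <;> fin_cases l <;>
    simp [Smat, e, Matrix.mul_apply, Fintype.sum_prod_type, Fin.sum_univ_two,
      Matrix.vecMulVec_apply, Matrix.one_apply, Prod.ext_iff] <;> norm_num

lemma not_lu : ¬ LUequiv rhoEx sigmaEx := by
  rintro ⟨U, hU, V, hV, h⟩
  set W : Matrix (Fin 2 × Fin 2) (Fin 2 × Fin 2) ℂ := U ⊗ₖ V with hWdef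
  have hUU : U * Uᴴ = 1 := by
    have := (Matrix.mem_unitaryGroup_iff.mp hU)
    simpa [Matrix.star_eq_conjTranspose] using this
  have hVV : V * Vᴴ = 1 := by
    have := (Matrix.mem_unitaryGroup_iff.mp hV)
    simpa [Matrix.star_eq_conjTranspose] using this
  have hUU' : Uᴴ * U = 1 := by
    have := (Matrix.mem_unitaryGroup_iff'.mp hU)
    simpa [Matrix.star_eq_conjTranspose] using this
  have hVV' : Vᴴ * V = 1 := by
    have := (Matrix.mem_unitaryGroup_iff'.mp hV)
    simpa [Matrix.star_eq_conjTranspose] using this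
  have hWH : Wᴴ = Uᴴ ⊗ₖ Vᴴ := by
    ext ⟨i,j⟩ ⟨k,l⟩
    simp [hWdef, Matrix.conjTranspose_apply, Matrix.kroneckerMap_apply, mul_comm]
  have hW1 : W * Wᴴ = 1 := by
    rw [hWH, hWdef, ← Matrix.mul_kronecker_mul, hUU, hVV, Matrix.one_kronecker_one]
  have hW2 : Wᴴ * W = 1 := by
    rw [hWH, hWdef, ← Matrix.mul_kronecker_mul, hUU', hVV', Matrix.one_kronecker_one]
  have h1 : ∀ c : ℂ, rhoEx - c • 1 = W * (sigmaEx - c • 1) * Wᴴ := by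
    intro c
    rw [h, Matrix.mul_sub, Matrix.sub_mul, Matrix.mul_smul, Matrix.smul_mul,
      Matrix.mul_one, hW1]
  have key : (3/32 : ℂ) • Matrix.vecMulVec (e 0 0) (star (e 0 0))
      = W * ((3/64 : ℂ) • Matrix.vecMulVec (e 0 0 + e 1 1) (star (e 0 0 + e 1 1))) * Wᴴ := by
    rw [← hA, ← hB, h1 (1/4 : ℂ), h1 (1/8 : ℂ)]
    have assoc : (W * (sigmaEx - (1/4:ℂ)•1) * Wᴴ) * (W * (sigmaEx - (1/8:ℂ)•1) * Wᴴ)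
        = W * ((sigmaEx - (1/4:ℂ)•1) * ((Wᴴ * W) * ((sigmaEx - (1/8:ℂ)•1) * Wᴴ))) := by
      simp only [Matrix.mul_assoc]
    rw [assoc, hW2, Matrix.one_mul]
    simp only [Matrix.mul_assoc]
  have hent : ((3/32 : ℂ) • Matrix.vecMulVec (e 0 0) (star (e 0 0))) ((0:Fin 2),(0:Fin 2)) ((0:Fin 2),(0:Fin 2))
      = (W * ((3/64 : ℂ) • Matrix.vecMulVec (e 0 0 + e 1 1) (star (e 0 0 + e 1 1))) * Wᴴ)
        ((0:Fin 2),(0:Fin 2)) ((0:Fin 2),(0:Fin 2)) := by rw [key]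
  -- Turn the entry identity into a scalar equation
  set a : ℂ := U 0 0 * V 0 0 + U 0 1 * V 0 1 with ha
  have hent' : a * star a = 2 := by
    have h' := hent
    simp only [hWdef, Matrix.mul_apply, Matrix.smul_apply, Matrix.vecMulVec_apply,
      Matrix.conjTranspose_apply, Fintype.sum_prod_type, Fin.sum_univ_two,
      Matrix.kroneckerMap_apply, Pi.add_apply, Pi.star_apply, Pi.smul_apply,
      smul_eq_mul, e] at h'
    norm_num [Prod.ext_iff] at h'
    rw [ha]
    simp only [Complex.star_def, map_add, _root_.map_mul]
    linear_combination (-64/3 : ℂ) * h'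
  -- norms
  have hU0 : Complex.normSq (U 0 0) + Complex.normSq (U 0 1) = 1 := by
    have h0 := congrFun (congrFun hUU 0) 0
    simp only [Matrix.mul_apply, Fin.sum_univ_two, Matrix.conjTranspose_apply,
      Matrix.one_apply_eq] at h0
    have : (Complex.normSq (U 0 0) : ℂ) + Complex.normSq (U 0 1) = 1 := by
      rw [← h0]
      simp [Complex.mul_conj, Complex.star_def]
    exact_mod_cast this
  have hV0 : Complex.normSq (V 0 0) + Complex.normSq (V 0 1) = 1 := by
    have h0 := congrFun (congrFun hVV 0) 0
    simp only [Matrix.mul_apply, Fin.sum_univ_two, Matrix.conjTranspose_apply,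
      Matrix.one_apply_eq] at h0
    have : (Complex.normSq (V 0 0) : ℂ) + Complex.normSq (V 0 1) = 1 := by
      rw [← h0]
      simp [Complex.mul_conj, Complex.star_def]
    exact_mod_cast this
  have hnsq : Complex.normSq a = 2 := by
    have : (Complex.normSq a : ℂ) = 2 := by
      rw [← Complex.mul_conj a]
      simpa [Complex.star_def] using hent'
    exact_mod_cast this
  -- Cauchy–Schwarz contradiction
  have habs : ‖a‖ ≤ ‖U 0 0‖ * ‖V 0 0‖
      + ‖U 0 1‖ * ‖V 0 1‖ := by
    calc ‖a‖ ≤ ‖U 0 0 * V 0 0‖ + ‖U 0 1 * V 0 1‖ :=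
          norm_add_le _ _
      _ = _ := by rw [norm_mul, norm_mul]
  have hU0' : ‖U 0 0‖ ^ 2 + ‖U 0 1‖ ^ 2 = 1 := by
    simpa [Complex.sq_norm] using hU0
  have hV0' : ‖V 0 0‖ ^ 2 + ‖V 0 1‖ ^ 2 = 1 := by
    simpa [Complex.sq_norm] using hV0
  have ha2 : ‖a‖ ^ 2 = 2 := by
    rw [Complex.sq_norm]; exact hnsq
  nlinarith [sq_nonneg (‖U 0 0‖ * ‖V 0 1‖
      - ‖U 0 1‖ * ‖V 0 0‖),
    norm_nonneg a, norm_nonneg (U 0 0), norm_nonneg (U 0 1),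
    norm_nonneg (V 0 0), norm_nonneg (V 0 1),
    mul_nonneg (norm_nonneg (U 0 0)) (norm_nonneg (V 0 0)),
    mul_nonneg (norm_nonneg (U 0 1)) (norm_nonneg (V 0 1))]

/-- `ρ` and `σ` are of full rank and have the same eigenvalues (equal
characteristic polynomials), yet they are not LU equivalent. -/
theorem stmt11 :
    rhoEx.det ≠ 0 ∧ sigmaEx.det ≠ 0 ∧ rhoEx.charpoly = sigmaEx.charpoly ∧
      ¬ LUequiv rhoEx sigmaEx := by
  refine ⟨?_, ?_, charpoly_eq, not_lu⟩
  · rw [det_rho]; norm_num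
  · rw [det_sigma]; norm_num
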